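/- If a sequence of continuous curves γᵢ : [0,1] → ℝⁿ converges to γ in Fréchet distance and all curves have total curvature bounded above by a common constant M, then Len(γᵢ) → Len(γ). -/

import Mathlib

noncomputable section

/-- Sum of the exterior turning angles of the polygonal path through the given
list of vertices. -/
def turnSum {n : ℕ} : List (EuclideanSpace ℝ (Fin n)) → ℝ
  | a :: b :: c :: rest =>
      InnerProductGeometry.angle (b - a) (c - b) + turnSum (b :: c :: rest)
  | _ => 0

/-- The set of turning-angle sums of polygons inscribed in `γ`, with vertex
parameters drawn (in increasing order) from `[0,1]`. -/
def tcSet {n : ℕ} (γ : ℝ → EuclideanSpace ℝ (Fin n)) : Set ℝ :=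
  {x | ∃ t : List ℝ, t.Chain' (· < ·) ∧ (∀ u ∈ t, u ∈ Set.Icc (0:ℝ) 1) ∧
    x = turnSum (t.map γ)}

/-- The total curvature of the curve `γ : [0,1] → ℝⁿ`: the supremum of the
turning-angle sums of inscribed polygons. -/
def totCurv {n : ℕ} (γ : ℝ → EuclideanSpace ℝ (Fin n)) : ℝ := sSup (tcSet γ)

/-- The arclength of the curve `γ : [0,1] → ℝⁿ`. -/
def len {n : ℕ} (γ : ℝ → EuclideanSpace ℝ (Fin n)) : ℝ :=
  (eVariationOn γ (Set.Icc 0 1)).toReal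

/-- The Fréchet distance between the curves `K, L : [0,1] → ℝⁿ`: the infimum
over (strictly monotone, continuous, endpoint-preserving) reparametrizations
`σ` of the supremum of `‖K t − L (σ t)‖`. -/
def frechetDist {n : ℕ} (K L : ℝ → EuclideanSpace ℝ (Fin n)) : ℝ :=
  ⨅ σ : {f : ℝ → ℝ // ContinuousOn f (Set.Icc 0 1) ∧
      StrictMonoOn f (Set.Icc 0 1) ∧ f 0 = 0 ∧ f 1 = 1},
    ⨆ t : Set.Icc (0:ℝ) 1, ‖K t - L (σ.1 t)‖

/-!
Let `σ` be a reparametrization with `‖K t - L (σ t)‖ ≤ d`, let `a₀, …, aₘ` be an inscribed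
polygon of `K` and `bₖ = L (σ tₖ)` the matching points of `L`; put `wₖ = aₖ - bₖ` and let `eₖ` be
the unit direction of `aₖ₊₁ - aₖ`. Then `‖aₖ₊₁ - aₖ‖ = ⟪bₖ₊₁ - bₖ, eₖ⟫ + ⟪wₖ₊₁ - wₖ, eₖ⟫`.
The first terms add up to at most the length of the polygon `b`; summing the second ones by parts
leaves two boundary terms, each at most `d`, and the terms `⟪wₖ, eₖ₋₁ - eₖ⟫ ≤ d ‖eₖ₋₁ - eₖ‖`, and
the chord `‖eₖ₋₁ - eₖ‖` is at most the turning angle at `aₖ`. Hence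
`len K ≤ len L + d (TC(K) + 2)`. The inverse reparametrization gives the reverse inequality, so
`|len K - len L| ≤ δ(K, L) (M + 2)`, which tends to `0`.
-/

open InnerProductGeometry
open scoped InnerProductSpace

section UnitDir

variable {V : Type*} [NormedAddCommGroup V] [InnerProductSpace ℝ V]

def unitDir (u : V) : V := ‖u‖⁻¹ • u

lemma norm_unitDir_le (u : V) : ‖unitDir u‖ ≤ 1 := by
  rw [unitDir, norm_smul, norm_inv, norm_norm]
  exact inv_mul_le_one

lemma norm_unitDir_of_ne_zero {u : V} (hu : u ≠ 0) : ‖unitDir u‖ = 1 := by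
  rw [unitDir, norm_smul, norm_inv, norm_norm, inv_mul_cancel₀ (norm_ne_zero_iff.2 hu)]

lemma real_inner_unitDir_le_norm (v u : V) : ⟪v, unitDir u⟫_ℝ ≤ ‖v‖ :=
  (real_inner_le_norm _ _).trans (mul_le_of_le_one_right (norm_nonneg _) (norm_unitDir_le u))

lemma real_inner_self_unitDir (u : V) : ⟪u, unitDir u⟫_ℝ = ‖u‖ := by
  rcases eq_or_ne u 0 with rfl | hu
  · simp [unitDir]
  · rw [unitDir, real_inner_smul_right, real_inner_self_eq_norm_sq]
    field_simp

lemma norm_unitDir_sub_unitDir_le_angle (u w : V) : ‖unitDir u - unitDir w‖ ≤ angle u w := by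
  rcases eq_or_ne u 0 with rfl | hu
  · simpa [unitDir, angle_zero_left] using
      (norm_unitDir_le w).trans (by linarith [Real.pi_gt_three])
  rcases eq_or_ne w 0 with rfl | hw
  · simpa [unitDir, angle_zero_right] using
      (norm_unitDir_le u).trans (by linarith [Real.pi_gt_three])
  -- chord `2 - 2 cos θ ≤ θ²` between two points of the unit sphere at angle `θ`
  have hcos : ⟪unitDir u, unitDir w⟫_ℝ = Real.cos (angle u w) := by
    rw [cos_angle, unitDir, unitDir, real_inner_smul_left, real_inner_smul_right]
    field_simp
  have hsq : ‖unitDir u - unitDir w‖ ^ 2 ≤ angle u w ^ 2 := by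
    rw [norm_sub_sq_real, hcos, norm_unitDir_of_ne_zero hu, norm_unitDir_of_ne_zero hw]
    linarith [Real.one_sub_sq_div_two_le_cos (x := angle u w)]
  exact (pow_le_pow_iff_left₀ (norm_nonneg _) (angle_nonneg u w) two_ne_zero).1 hsq

lemma norm_sub_add_inner_le (a₀ a₁ b₀ b₁ : V) :
    ‖a₁ - a₀‖ + ⟪a₀ - b₀, unitDir (a₁ - a₀)⟫_ℝ ≤ ‖b₁ - b₀‖ + ⟪a₁ - b₁, unitDir (a₁ - a₀)⟫_ℝ := by
  have hsplit : a₁ - a₀ = (b₁ - b₀) + (a₁ - b₁) - (a₀ - b₀) := by abel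
  have h := real_inner_self_unitDir (a₁ - a₀)
  rw [hsplit, inner_sub_left, inner_add_left, ← hsplit] at h
  linarith [real_inner_unitDir_le_norm (b₁ - b₀) (a₁ - a₀)]

end UnitDir

section PolyLen

variable {V : Type*} [SeminormedAddCommGroup V]

def polyLen : List V → ℝ
  | a :: b :: rest => ‖b - a‖ + polyLen (b :: rest)
  | _ => 0

lemma polyLen_map_range (g : ℕ → V) (m : ℕ) :
    polyLen ((List.range (m + 1)).map g) = ∑ i ∈ Finset.range m, ‖g (i + 1) - g i‖ := by
  induction m generalizing g with
  | zero => simp [polyLen]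
  | succ m ih =>
    have hshift : (List.range (m + 1)).map (fun i => g (i + 1)) =
        g 1 :: (List.range m).map (fun i => g (i + 2)) := by
      simp [List.range_succ_eq_map, List.map_map, Function.comp_def]
    rw [List.range_succ_eq_map, List.map_cons, List.map_map, Function.comp_def, hshift, polyLen,
      ← hshift, ih, Finset.sum_range_succ', add_comm]

lemma sum_edist_eq_ofReal_polyLen (g : ℕ → V) (m : ℕ) :
    ∑ i ∈ Finset.range m, edist (g (i + 1)) (g i) =
      ENNReal.ofReal (polyLen ((List.range (m + 1)).map g)) := by
  rw [polyLen_map_range, ENNReal.ofReal_sum_of_nonneg fun _ _ => norm_nonneg _]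
  simp only [edist_dist, dist_eq_norm]

end PolyLen

section TurnSum

variable {n : ℕ} {d : ℝ}

lemma polyLen_add_inner_le_of_forall₂ {a₀ a₁ b₀ b₁ : EuclideanSpace ℝ (Fin n)}
    {as bs : List (EuclideanSpace ℝ (Fin n))} (h₁ : ‖a₁ - b₁‖ ≤ d)
    (h : List.Forall₂ (fun a b => ‖a - b‖ ≤ d) as bs) :
    polyLen (a₀ :: a₁ :: as) + ⟪a₀ - b₀, unitDir (a₁ - a₀)⟫_ℝ ≤
      polyLen (b₀ :: b₁ :: bs) + d * turnSum (a₀ :: a₁ :: as) + d := by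
  induction h generalizing a₀ a₁ b₀ b₁ with
  | nil =>
    simp only [polyLen, turnSum]
    linarith [norm_sub_add_inner_le a₀ a₁ b₀ b₁, real_inner_unitDir_le_norm (a₁ - b₁) (a₁ - a₀)]
  | @cons a₂ b₂ _ _ h₂ _ ih =>
    -- summation by parts: the boundary term at `a₁` changes by at most `d` times the turn there
    have hturn : ⟪a₁ - b₁, unitDir (a₁ - a₀)⟫_ℝ - ⟪a₁ - b₁, unitDir (a₂ - a₁)⟫_ℝ ≤
        d * angle (a₁ - a₀) (a₂ - a₁) := by
      rw [← inner_sub_right]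
      exact (real_inner_le_norm _ _).trans (mul_le_mul h₁
        (norm_unitDir_sub_unitDir_le_angle _ _) (norm_nonneg _) ((norm_nonneg _).trans h₁))
    have := ih (a₀ := a₁) (b₀ := b₁) h₂
    simp only [polyLen, turnSum] at this ⊢
    linarith [norm_sub_add_inner_le a₀ a₁ b₀ b₁]

lemma polyLen_le_add_turnSum_of_forall₂ (hd : 0 ≤ d) {as bs : List (EuclideanSpace ℝ (Fin n))}
    (h : List.Forall₂ (fun a b => ‖a - b‖ ≤ d) as bs) :
    polyLen as ≤ polyLen bs + d * (turnSum as + 2) := by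
  match as, bs, h with
  | [], [], .nil => simp only [polyLen, turnSum]; linarith
  | [_], [_], .cons _ .nil => simp only [polyLen, turnSum]; linarith
  | a₀ :: a₁ :: _, b₀ :: _ :: _, .cons h₀ (.cons h₁ h) =>
    have hb := real_inner_unitDir_le_norm (b₀ - a₀) (a₁ - a₀)
    rw [← neg_sub, inner_neg_left, norm_neg] at hb
    linarith [polyLen_add_inner_le_of_forall₂ (a₀ := a₀) (b₀ := b₀) h₁ h, h₀]

end TurnSum

section Curves

open Set

variable {n : ℕ} {K L : ℝ → EuclideanSpace ℝ (Fin n)} {σ : ℝ → ℝ} {d M : ℝ}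

lemma zero_mem_tcSet (γ : ℝ → EuclideanSpace ℝ (Fin n)) : (0 : ℝ) ∈ tcSet γ :=
  ⟨[], List.isChain_nil, by simp, rfl⟩

lemma eVariationOn_le_add_of_norm_sub_comp_le (hσ : MonotoneOn σ (Icc 0 1))
    (hσI : MapsTo σ (Icc 0 1) (Icc 0 1)) (hK : ∀ x ∈ tcSet K, x ≤ M)
    (hKL : ∀ t ∈ Icc (0 : ℝ) 1, ‖K t - L (σ t)‖ ≤ d) :
    eVariationOn K (Icc 0 1) ≤ eVariationOn L (Icc 0 1) + ENNReal.ofReal (d * (M + 2)) := by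
  have hd : 0 ≤ d := (norm_nonneg _).trans (hKL 0 ⟨le_rfl, zero_le_one⟩)
  -- strictly increasing partitions suffice, and these are exactly the ones `tcSet K` sees
  rw [eVariationOn.eVariationOn_eq_strictMonoOn]
  refine iSup_le fun ⟨m, u, hu, huI⟩ => ?_
  set t := (List.range (m + 1)).map u
  have htI : ∀ x ∈ t, x ∈ Icc (0 : ℝ) 1 := by
    simp only [t, List.mem_map, List.mem_range]
    rintro _ ⟨i, hi, rfl⟩
    exact huI i (mem_Iic.2 (Nat.lt_succ_iff.1 hi))
  have hturn : turnSum (t.map K) ≤ M := by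
    refine hK _ ⟨t, ?_, htI, rfl⟩
    show t.IsChain (· < ·)
    rw [List.isChain_map, List.isChain_range_succ]
    exact fun i hi => hu (mem_Iic.2 hi.le) (mem_Iic.2 hi) (Nat.lt_succ_self i)
  have hpoly : polyLen (t.map K) ≤ polyLen (t.map (L ∘ σ)) + d * (M + 2) := by
    refine (polyLen_le_add_turnSum_of_forall₂ hd ?_).trans (by gcongr)
    simp only [List.forall₂_map_left_iff, List.forall₂_map_right_iff, List.forall₂_same]
    exact fun x hx => hKL x (htI x hx)
  have hsum (g : ℝ → EuclideanSpace ℝ (Fin n)) :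
      ∑ i ∈ Finset.range m, edist (g (u (i + 1))) (g (u i)) =
        ENNReal.ofReal (polyLen (t.map g)) := by
    rw [List.map_map]; exact sum_edist_eq_ofReal_polyLen (g ∘ u) m
  calc ∑ i ∈ Finset.range m, edist (K (u (i + 1))) (K (u i))
      ≤ ENNReal.ofReal (polyLen (t.map (L ∘ σ))) + ENNReal.ofReal (d * (M + 2)) := by
        rw [hsum]; exact (ENNReal.ofReal_le_ofReal hpoly).trans ENNReal.ofReal_add_le
    _ ≤ eVariationOn (L ∘ σ) (Icc 0 1) + ENNReal.ofReal (d * (M + 2)) := by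
        rw [← hsum]
        gcongr
        exact eVariationOn.sum_le_of_monotoneOn_Iic hu.monotoneOn fun i hi => huI i hi
    _ ≤ eVariationOn L (Icc 0 1) + ENNReal.ofReal (d * (M + 2)) := by
        gcongr
        exact eVariationOn.comp_le_of_monotoneOn L σ hσ hσI

lemma len_le_add_of_norm_sub_comp_le (hσ : MonotoneOn σ (Icc 0 1))
    (hσI : MapsTo σ (Icc 0 1) (Icc 0 1)) (hK : ∀ x ∈ tcSet K, x ≤ M)
    (hL : BoundedVariationOn L (Icc 0 1)) (hKL : ∀ t ∈ Icc (0 : ℝ) 1, ‖K t - L (σ t)‖ ≤ d) :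
    len K ≤ len L + d * (M + 2) := by
  have hd : 0 ≤ d := (norm_nonneg _).trans (hKL 0 ⟨le_rfl, zero_le_one⟩)
  have hM : 0 ≤ M := hK 0 (zero_mem_tcSet K)
  calc len K ≤ (eVariationOn L (Icc 0 1) + ENNReal.ofReal (d * (M + 2))).toReal :=
        ENNReal.toReal_mono (ENNReal.add_ne_top.2 ⟨hL, ENNReal.ofReal_ne_top⟩)
          (eVariationOn_le_add_of_norm_sub_comp_le hσ hσI hK hKL)
    _ = len L + d * (M + 2) := by
        rw [ENNReal.toReal_add hL ENNReal.ofReal_ne_top, ENNReal.toReal_ofReal (by positivity), len]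

lemma exists_monotoneOn_rightInvOn_of_continuousOn (hc : ContinuousOn σ (Icc 0 1))
    (hσ : MonotoneOn σ (Icc 0 1)) (h0 : σ 0 = 0) (h1 : σ 1 = 1) :
    ∃ τ : ℝ → ℝ, MonotoneOn τ (Icc 0 1) ∧ MapsTo τ (Icc 0 1) (Icc 0 1) ∧
      RightInvOn τ σ (Icc 0 1) := by
  have hsurj : SurjOn σ (Icc 0 1) (Icc 0 1) := by
    simpa [h0, h1] using hc.surjOn_Icc (left_mem_Icc.2 zero_le_one) (right_mem_Icc.2 zero_le_one)
  exact ⟨Function.invFunOn σ (Icc 0 1),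
    Function.monotoneOn_of_rightInvOn_of_mapsTo hσ hsurj.rightInvOn_invFunOn hsurj.mapsTo_invFunOn,
    hsurj.mapsTo_invFunOn, hsurj.rightInvOn_invFunOn⟩

lemma abs_len_sub_le_of_norm_sub_comp_le (hc : ContinuousOn σ (Icc 0 1))
    (hσ : MonotoneOn σ (Icc 0 1)) (h0 : σ 0 = 0) (h1 : σ 1 = 1)
    (hK : BoundedVariationOn K (Icc 0 1)) (hL : BoundedVariationOn L (Icc 0 1))
    (hKtc : ∀ x ∈ tcSet K, x ≤ M) (hLtc : ∀ x ∈ tcSet L, x ≤ M)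
    (hKL : ∀ t ∈ Icc (0 : ℝ) 1, ‖K t - L (σ t)‖ ≤ d) :
    |len K - len L| ≤ d * (M + 2) := by
  obtain ⟨τ, hτ, hτI, hστ⟩ := exists_monotoneOn_rightInvOn_of_continuousOn hc hσ h0 h1
  have hLK : ∀ s ∈ Icc (0 : ℝ) 1, ‖L s - K (τ s)‖ ≤ d := fun s hs => by
    simpa only [norm_sub_rev, hστ hs] using hKL (τ s) (hτI hs)
  rw [abs_sub_le_iff]
  constructor
  · have hσI : MapsTo σ (Icc 0 1) (Icc 0 1) := by simpa only [h0, h1] using hσ.mapsTo_Icc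
    linarith [len_le_add_of_norm_sub_comp_le hσ hσI hKtc hL hKL]
  · linarith [len_le_add_of_norm_sub_comp_le hτ hτI hLtc hK hLK]

lemma bddAbove_range_norm_sub_comp (hK : BoundedVariationOn K (Icc 0 1))
    (hL : BoundedVariationOn L (Icc 0 1)) (hσI : MapsTo σ (Icc 0 1) (Icc 0 1)) :
    BddAbove (range fun t : Icc (0 : ℝ) 1 => ‖K t - L (σ t)‖) := by
  have h0 : (0 : ℝ) ∈ Icc (0 : ℝ) 1 := ⟨le_rfl, zero_le_one⟩
  refine ⟨len K + dist (K 0) (L 0) + len L, ?_⟩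
  rintro _ ⟨⟨t, ht⟩, rfl⟩
  show ‖K t - L (σ t)‖ ≤ _
  rw [← dist_eq_norm]
  calc dist (K t) (L (σ t)) ≤ dist (K t) (K 0) + dist (K 0) (L 0) + dist (L 0) (L (σ t)) :=
        dist_triangle4 _ _ _ _
    _ ≤ len K + dist (K 0) (L 0) + len L := by
        gcongr
        · exact hK.dist_le ht h0
        · exact hL.dist_le h0 (hσI ht)

lemma abs_len_sub_le_frechetDist_mul (hK : BoundedVariationOn K (Icc 0 1))
    (hL : BoundedVariationOn L (Icc 0 1)) (hKtc : ∀ x ∈ tcSet K, x ≤ M)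
    (hLtc : ∀ x ∈ tcSet L, x ≤ M) :
    |len K - len L| ≤ frechetDist K L * (M + 2) := by
  have hM : 0 < M + 2 := by linarith [hKtc 0 (zero_mem_tcSet K)]
  have : Nonempty {f : ℝ → ℝ // ContinuousOn f (Icc 0 1) ∧ StrictMonoOn f (Icc 0 1) ∧
      f 0 = 0 ∧ f 1 = 1} :=
    ⟨⟨id, continuousOn_id, strictMono_id.strictMonoOn _, rfl, rfl⟩⟩
  rw [← div_le_iff₀ hM, frechetDist]
  refine le_ciInf fun ⟨σ, hc, hσ, h0, h1⟩ => ?_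
  have hσI : MapsTo σ (Icc 0 1) (Icc 0 1) := by simpa only [h0, h1] using hσ.monotoneOn.mapsTo_Icc
  rw [div_le_iff₀ hM]
  exact abs_len_sub_le_of_norm_sub_comp_le hc hσ.monotoneOn h0 h1 hK hL hKtc hLtc
    fun t ht => le_ciSup (bddAbove_range_norm_sub_comp hK hL hσI) ⟨t, ht⟩

end Curves

theorem len_tendsto_of_frechet_tendsto_general {n : ℕ}
    (γs : ℕ → ℝ → EuclideanSpace ℝ (Fin n)) (γ : ℝ → EuclideanSpace ℝ (Fin n))
    (M : ℝ)
    (hr : ∀ i, BoundedVariationOn (γs i) (Set.Icc 0 1))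
    (hγr : BoundedVariationOn γ (Set.Icc 0 1))
    (htc : ∀ i, ∀ x ∈ tcSet (γs i), x ≤ M)
    (hγtc : ∀ x ∈ tcSet γ, x ≤ M)
    (hfr : Filter.Tendsto (fun i => frechetDist (γs i) γ) Filter.atTop (nhds 0)) :
    Filter.Tendsto (fun i => len (γs i)) Filter.atTop (nhds (len γ)) := by
  rw [tendsto_iff_dist_tendsto_zero]
  refine squeeze_zero (fun _ => dist_nonneg) (fun i => ?_) (by simpa using hfr.mul_const (M + 2))
  rw [Real.dist_eq]
  exact abs_len_sub_le_frechetDist_mul (hr i) hγr (htc i) hγtc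

/-- If continuous rectifiable curves `γᵢ : [0,1] → ℝⁿ`
converge to `γ` in Fréchet distance and all the curves have total curvature
bounded above by a common constant `M`, then `len γᵢ → len γ`. -/
theorem len_tendsto_of_frechet_tendsto {n : ℕ}
    (γs : ℕ → ℝ → EuclideanSpace ℝ (Fin n)) (γ : ℝ → EuclideanSpace ℝ (Fin n))
    (M : ℝ)
    (hc : ∀ i, ContinuousOn (γs i) (Set.Icc 0 1))
    (hγc : ContinuousOn γ (Set.Icc 0 1))
    (hr : ∀ i, BoundedVariationOn (γs i) (Set.Icc 0 1))
    (hγr : BoundedVariationOn γ (Set.Icc 0 1))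
    (htc : ∀ i, ∀ x ∈ tcSet (γs i), x ≤ M)
    (hγtc : ∀ x ∈ tcSet γ, x ≤ M)
    (hfr : Filter.Tendsto (fun i => frechetDist (γs i) γ) Filter.atTop (nhds 0)) :
    Filter.Tendsto (fun i => len (γs i)) Filter.atTop (nhds (len γ)) :=
  len_tendsto_of_frechet_tendsto_general γs γ M hr hγr htc hγtc hfr
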